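/- arXiv:2412.03964 — 3 statements merged into one kernel-verified Lean document; each statement's English description precedes it below -/
import Mathlib

section
/- Let A be an n-dimensional (n ≥ 1) nilpotent non-unital associative algebra over ℂ that is null-filiform, i.e. dim A^i = (n+1) − i for all 1 ≤ i ≤ n+1. Then A has a basis e_1, …, e_n such that e_i·e_j = e_{i+j} whenever i + j ≤ n and e_i·e_j = 0 whenever i + j > n. In particular, up to isomorphism there is a unique n-dimensional null-filiform complex associative algebra. -/
/-!
Pick `x` spanning `A` modulo `A²` (possible since `A²` has codimension one). Multiplying out
`A^a · A^b ⊆ (ℂ xᵃ + A^{a+1}) (ℂ xᵇ + A^{b+1})` shows inductively that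
`A^i ⊆ ℂ xⁱ + A^{i+1}` for every `i ≥ 1`. As `A^{n+1} = 0`, the powers `x, x², …, xⁿ` span
`A`, hence form a basis since `dim A = n`, and `xⁱ xʲ = x^{i+j}` vanishes once `i + j > n`.
Two such algebras share the structure constants in these bases, so the linear map matching
the bases is multiplicative.
-/

variable (A : Type*) [NonUnitalRing A] [Module ℂ A] [SMulCommClass ℂ A A] [IsScalarTower ℂ A A]

/-- Product of two submodules of a non-unital algebra:
the span of all pairwise products. -/
def pmul (I J : Submodule ℂ A) : Submodule ℂ A :=
  Submodule.span ℂ (Set.image2 (· * ·) (I : Set A) (J : Set A))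

/-- The series of powers `A^1 = A`, `A^{i+1} = Σ_{k=1}^{i} A^k · A^{i+1-k}`.
(`algPow A 0` is junk, set to `⊤`.) -/
def algPow : ℕ → Submodule ℂ A
  | 0 => ⊤
  | 1 => ⊤
  | n + 2 => ⨆ k : Fin (n + 1), pmul A (algPow (k + 1)) (algPow (n + 1 - k))
  termination_by n => n
  decreasing_by
  · omega
  · omega

/-- An algebra is nilpotent if some power `A^m` (`m ≥ 1`) vanishes. -/
def IsNilpotentAlg : Prop :=
  ∃ m : ℕ, 1 ≤ m ∧ algPow A m = ⊥

/-- An `n`-dimensional algebra is null-filiform if `dim A^i = (n+1) - i` for `1 ≤ i ≤ n+1`. -/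
def NullFiliform (n : ℕ) : Prop :=
  ∀ i, 1 ≤ i → i ≤ n + 1 → Module.finrank ℂ (algPow A i) = n + 1 - i

/-- `e 1, …, e n` is a basis of `A` (indices `1,…,n`). -/
def IsBasisFam (n : ℕ) (e : ℕ → A) : Prop :=
  (LinearIndependent ℂ fun i : Fin n => e (i.1 + 1)) ∧
    Submodule.span ℂ (Set.range fun i : Fin n => e (i.1 + 1)) = ⊤

/-- The null-filiform multiplication table: `e i * e j = e (i+j)` if `i + j ≤ n`,
and `e i * e j = 0` if `i + j > n`. -/
def NullFiliformTable (n : ℕ) (e : ℕ → A) : Prop :=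
  ∀ i j, 1 ≤ i → i ≤ n → 1 ≤ j → j ≤ n →
    e i * e j = if i + j ≤ n then e (i + j) else 0

open Module Submodule Set

theorem Submodule.exists_span_singleton_sup_eq_top {K V : Type*} [DivisionRing K]
    [AddCommGroup V] [Module K V] [FiniteDimensional K V] {W : Submodule K V}
    (h : finrank K V ≤ finrank K W + 1) : ∃ x : V, K ∙ x ⊔ W = ⊤ := by
  by_cases hW : W = ⊤
  · exact ⟨0, by simp [hW]⟩
  obtain ⟨x, -, hx⟩ := SetLike.exists_of_lt (lt_top_iff_ne_top.2 hW)
  have hlt : W < K ∙ x ⊔ W := lt_of_le_of_ne le_sup_right fun hWx =>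
    hx (hWx ▸ mem_sup_left (mem_span_singleton_self x))
  have := finrank_lt_finrank_of_lt hlt
  exact ⟨x, eq_top_of_finrank_eq (le_antisymm (finrank_le _) (by omega))⟩

theorem top_le_span_range_sup_of_le_span_singleton_sup {R M : Type*} [Semiring R]
    [AddCommMonoid M] [Module R M] {W : ℕ → Submodule R M} {v : ℕ → M} (h₁ : W 1 = ⊤)
    (hW : ∀ i, 1 ≤ i → W i ≤ R ∙ v i ⊔ W (i + 1)) :
    ∀ k : ℕ, ⊤ ≤ span R (range fun i : Fin k => v (i + 1)) ⊔ W (k + 1)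
  | 0 => le_sup_of_le_right h₁.ge
  | k + 1 => by
    let f : Fin (k + 1) → M := fun i => v (i + 1)
    refine (top_le_span_range_sup_of_le_span_singleton_sup h₁ hW k).trans (sup_le ?_ ?_)
    · exact le_sup_of_le_left (span_mono (range_comp_subset_range Fin.castSucc f))
    · refine (hW (k + 1) (by omega)).trans (sup_le_sup_right ?_ _)
      exact (span_singleton_le_iff_mem _ _).2 (subset_span (mem_range_self (f := f) (Fin.last k)))

theorem LinearMap.map_mul_of_basis {R ι A B : Type*} [CommSemiring R]
    [NonUnitalNonAssocSemiring A] [Module R A] [SMulCommClass R A A] [IsScalarTower R A A]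
    [NonUnitalNonAssocSemiring B] [Module R B] [SMulCommClass R B B] [IsScalarTower R B B]
    (b : Basis ι R A) (φ : A →ₗ[R] B) (h : ∀ i j, φ (b i * b j) = φ (b i) * φ (b j))
    (x y : A) : φ (x * y) = φ x * φ y := by
  have hmul : (LinearMap.mul R A).compr₂ φ = (LinearMap.mul R B).compl₁₂ φ φ :=
    b.ext fun i => b.ext fun j => h i j
  simpa using LinearMap.congr_fun₂ hmul x y

section SemigroupWithZero

variable {R : Type*} [SemigroupWithZero R]

/-- `posPow x i = xⁱ` for `i ≥ 1`; the value `posPow x 0 = 0` is junk, there being no unit. -/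
def posPow (x : R) : ℕ → R
  | 0 => 0
  | 1 => x
  | i + 2 => posPow x (i + 1) * x

theorem posPow_succ (x : R) {i : ℕ} (hi : 1 ≤ i) : posPow x (i + 1) = posPow x i * x := by
  obtain ⟨i, rfl⟩ := Nat.exists_eq_add_of_le' hi
  rfl

theorem posPow_add (x : R) {i j : ℕ} (hi : 1 ≤ i) (hj : 1 ≤ j) :
    posPow x i * posPow x j = posPow x (i + j) := by
  induction j, hj using Nat.le_induction with
  | base => exact (posPow_succ x hi).symm
  | succ j hj ih =>
    rw [posPow_succ x hj, ← mul_assoc, ih, ← posPow_succ x (by omega), add_assoc]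

theorem posPow_eq_zero_of_le {x : R} {k m : ℕ} (hk : 1 ≤ k) (h : posPow x k = 0)
    (hkm : k ≤ m) : posPow x m = 0 := by
  rcases hkm.eq_or_lt with rfl | hlt
  · exact h
  · rw [← Nat.add_sub_cancel' hkm, ← posPow_add x hk (by omega), h, zero_mul]

end SemigroupWithZero

section Powers

variable {A : Type*} [NonUnitalRing A] [Module ℂ A]

theorem algPow_one : algPow A 1 = ⊤ := by
  rw [algPow]

theorem mul_mem_algPow {a b : ℕ} (ha : 1 ≤ a) (hb : 1 ≤ b) {u v : A} (hu : u ∈ algPow A a)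
    (hv : v ∈ algPow A b) : u * v ∈ algPow A (a + b) := by
  obtain ⟨a, rfl⟩ := Nat.exists_eq_add_of_le' ha
  obtain ⟨b, rfl⟩ := Nat.exists_eq_add_of_le' hb
  rw [show a + 1 + (b + 1) = a + b + 2 by omega, algPow]
  refine mem_iSup_of_mem ⟨a, by omega⟩ (subset_span ⟨u, hu, v, ?_, rfl⟩)
  simpa [show a + b + 1 - a = b + 1 by omega] using hv

theorem posPow_mem_algPow (x : A) {i : ℕ} (hi : 1 ≤ i) : posPow x i ∈ algPow A i := by
  induction i, hi using Nat.le_induction with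
  | base => simp [algPow_one]
  | succ i hi ih =>
    rw [posPow_succ x hi]
    exact mul_mem_algPow hi le_rfl ih (by simp [algPow_one])

theorem pmul_algPow_le_span_posPow_sup [SMulCommClass ℂ A A] [IsScalarTower ℂ A A] {x : A}
    {a b : ℕ} (ha : 1 ≤ a) (hb : 1 ≤ b)
    (hxa : algPow A a ≤ ℂ ∙ posPow x a ⊔ algPow A (a + 1))
    (hxb : algPow A b ≤ ℂ ∙ posPow x b ⊔ algPow A (b + 1)) :
    pmul A (algPow A a) (algPow A b) ≤ ℂ ∙ posPow x (a + b) ⊔ algPow A (a + b + 1) := by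
  refine span_le.2 <| image2_subset_iff.2 fun u hu v hv => ?_
  obtain ⟨u₁, hu₁, u₂, hu₂, rfl⟩ := mem_sup.1 (hxa hu)
  obtain ⟨v₁, hv₁, v₂, hv₂, rfl⟩ := mem_sup.1 (hxb hv)
  obtain ⟨s, rfl⟩ := mem_span_singleton.1 hu₁
  obtain ⟨t, rfl⟩ := mem_span_singleton.1 hv₁
  have hexpand : (s • posPow x a + u₂) * (t • posPow x b + v₂) =
      (t * s) • posPow x (a + b) +
        (s • (posPow x a * v₂) + u₂ * (t • posPow x b + v₂)) := by
    simp only [add_mul, mul_add, smul_mul_assoc, mul_smul_comm, smul_add, smul_smul,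
      posPow_add x ha hb]
    abel
  have hxv₂ : posPow x a * v₂ ∈ algPow A (a + b + 1) :=
    mul_mem_algPow ha (by omega) (posPow_mem_algPow x ha) hv₂
  have hu₂v : u₂ * (t • posPow x b + v₂) ∈ algPow A (a + b + 1) := by
    simpa [add_right_comm] using mul_mem_algPow (by omega) hb hu₂ hv
  rw [SetLike.mem_coe, hexpand]
  exact add_mem (mem_sup_left (smul_mem _ _ (mem_span_singleton_self _)))
    (mem_sup_right (add_mem (smul_mem _ _ hxv₂) hu₂v))

theorem algPow_le_span_posPow_sup [SMulCommClass ℂ A A] [IsScalarTower ℂ A A] {x : A}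
    (hx : algPow A 1 ≤ ℂ ∙ x ⊔ algPow A 2) :
    ∀ i, 1 ≤ i → algPow A i ≤ ℂ ∙ posPow x i ⊔ algPow A (i + 1) := by
  intro i
  induction i using Nat.strong_induction_on with
  | _ i ih =>
    intro hi
    match i, hi with
    | 1, _ => exact hx
    | m + 2, _ =>
      rw [algPow]
      refine iSup_le fun k => ?_
      have hk := k.isLt
      have h := pmul_algPow_le_span_posPow_sup (x := x) (a := k + 1) (b := m + 1 - k)
        (by omega) (by omega) (ih _ (by omega) (by omega)) (ih _ (by omega) (by omega))
      rwa [show (k : ℕ) + 1 + (m + 1 - k) = m + 2 by omega] at h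

end Powers

section NullFiliform

variable {A : Type*} [NonUnitalRing A] [Module ℂ A] {n : ℕ}

theorem NullFiliform.algPow_succ_eq_bot [FiniteDimensional ℂ A] (hnf : NullFiliform A n) :
    algPow A (n + 1) = ⊥ :=
  finrank_eq_zero.1 (by simpa using hnf (n + 1) (by omega) le_rfl)

theorem NullFiliform.finrank_le_finrank_algPow_two_add_one (hdim : finrank ℂ A = n)
    (hnf : NullFiliform A n) : finrank ℂ A ≤ finrank ℂ (algPow A 2) + 1 := by
  rcases Nat.eq_zero_or_pos n with rfl | hn
  · omega
  · have := hnf 2 (by omega) (by omega)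
    omega

theorem NullFiliform.exists_isBasisFam_nullFiliformTable [SMulCommClass ℂ A A]
    [IsScalarTower ℂ A A] [FiniteDimensional ℂ A]
    (hdim : finrank ℂ A = n) (hnf : NullFiliform A n) :
    ∃ e : ℕ → A, IsBasisFam A n e ∧ NullFiliformTable A n e := by
  obtain ⟨x, hx⟩ :=
    Submodule.exists_span_singleton_sup_eq_top (hnf.finrank_le_finrank_algPow_two_add_one hdim)
  have hfilt := algPow_le_span_posPow_sup (A := A) (x := x) (algPow_one.trans_le hx.ge)
  have hbot := hnf.algPow_succ_eq_bot
  have hspan : ⊤ ≤ span ℂ (range fun i : Fin n => posPow x (i + 1)) := by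
    simpa [hbot] using top_le_span_range_sup_of_le_span_singleton_sup algPow_one hfilt n
  refine ⟨posPow x, ⟨linearIndependent_of_top_le_span_of_card_eq_finrank hspan (by simp [hdim]),
    top_le_iff.1 hspan⟩, fun i j hi _ hj _ => ?_⟩
  rw [posPow_add x hi hj]
  split_ifs with hij
  · rfl
  · have hxn : posPow x (n + 1) = 0 := by
      simpa [hbot] using posPow_mem_algPow x (Nat.le_add_left 1 n)
    exact posPow_eq_zero_of_le (by omega) hxn (by omega)

noncomputable def IsBasisFam.basis {e : ℕ → A} (he : IsBasisFam A n e) : Basis (Fin n) ℂ A :=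
  Basis.mk he.1 he.2.ge

@[simp]
theorem IsBasisFam.basis_apply {e : ℕ → A} (he : IsBasisFam A n e) (k : Fin n) :
    he.basis k = e (k + 1) :=
  Basis.mk_apply _ _ _

end NullFiliform

theorem exists_mul_linearEquiv_of_nullFiliformTable {A B : Type*} [NonUnitalRing A]
    [Module ℂ A] [SMulCommClass ℂ A A] [IsScalarTower ℂ A A] [NonUnitalRing B] [Module ℂ B]
    [SMulCommClass ℂ B B] [IsScalarTower ℂ B B] {n : ℕ} {e : ℕ → A} {f : ℕ → B}
    (he : IsBasisFam A n e) (heT : NullFiliformTable A n e)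
    (hf : IsBasisFam B n f) (hfT : NullFiliformTable B n f) :
    ∃ φ : A ≃ₗ[ℂ] B, ∀ x y : A, φ (x * y) = φ x * φ y := by
  let φ := he.basis.equiv hf.basis (Equiv.refl _)
  have hφ : ∀ i, 1 ≤ i → i ≤ n → φ (e i) = f i := by
    intro i hi hin
    obtain ⟨k, rfl⟩ := Nat.exists_eq_add_of_le' hi
    simpa using he.basis.equiv_apply ⟨k, by omega⟩ hf.basis (Equiv.refl _)
  refine ⟨φ, LinearMap.map_mul_of_basis he.basis φ.toLinearMap fun i j => ?_⟩
  have hi := i.isLt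
  have hj := j.isLt
  simp only [IsBasisFam.basis_apply, LinearEquiv.coe_coe]
  rw [heT (i + 1) (j + 1) (by omega) hi (by omega) hj, hφ (i + 1) (by omega) hi,
    hφ (j + 1) (by omega) hj, hfT (i + 1) (j + 1) (by omega) hi (by omega) hj]
  split_ifs with hij
  · exact hφ _ (by omega) hij
  · exact map_zero φ

theorem null_filiform_classification (n : ℕ) [FiniteDimensional ℂ A]
    (hdim : Module.finrank ℂ A = n) (hnf : NullFiliform A n) :
    (∃ e : ℕ → A, IsBasisFam A n e ∧ NullFiliformTable A n e) ∧
    ∀ (B : Type*) [NonUnitalRing B] [Module ℂ B] [SMulCommClass ℂ B B]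
      [IsScalarTower ℂ B B] [FiniteDimensional ℂ B],
      Module.finrank ℂ B = n → IsNilpotentAlg B → NullFiliform B n →
      ∃ φ : A ≃ₗ[ℂ] B, ∀ x y : A, φ (x * y) = φ x * φ y := by
  obtain ⟨e, he, heT⟩ := hnf.exists_isBasisFam_nullFiliformTable hdim
  refine ⟨⟨e, he, heT⟩, fun B _ _ _ _ _ hdimB _ hnfB => ?_⟩
  obtain ⟨f, hf, hfT⟩ := hnfB.exists_isBasisFam_nullFiliformTable hdimB
  exact exists_mul_linearEquiv_of_nullFiliformTable he heT hf hfT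
end

section
/- Let A be an n-dimensional naturally graded p-filiform non-unital associative algebra over ℂ (p ≥ 1, n − p ≥ 3) with natural grading (𝒜_i), let {e_1, …, e_{n−p}, f_1, …, f_p} be an adapted basis, and let x, y ∈ 𝒜_1 satisfy e_1·x = 0 and e_1·y = 0. Then x·y = 0. (In the paper's notation: f_i·f_j = 0 for all 1 ≤ i, j ≤ s_1, where f_1, …, f_{s_1} are the basis vectors of 𝒜_1 other than e_1.) -/
variable (A : Type*) [NonUnitalRing A] [Module ℂ A] [SMulCommClass ℂ A A] [IsScalarTower ℂ A A]

/-- A natural grading of `A`: a family of submodules `𝒜 1, 𝒜 2, …` (with `𝒜 0 = ⊥`)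
such that `A` is their internal direct sum, `𝒜 i · 𝒜 j ⊆ 𝒜 (i+j)` and
`𝒜 (i+1) = 𝒜 1 · 𝒜 i`. -/
structure IsNaturalGrading (𝒜 : ℕ → Submodule ℂ A) : Prop where
  zero : 𝒜 0 = ⊥
  internal : DirectSum.IsInternal 𝒜
  mul_le : ∀ i j, 1 ≤ i → 1 ≤ j → pmul A (𝒜 i) (𝒜 j) ≤ 𝒜 (i + j)
  succ : ∀ i, 1 ≤ i → 𝒜 (i + 1) = pmul A (𝒜 1) (𝒜 i)

/-- `x ∈ A ∖ A²` realizes the characteristic sequence `(n-p, 1, …, 1)`: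
the left multiplication `L_x` satisfies `L_x^{n-p-1} ≠ 0` and `rank L_x = n-p-1`. -/
def RealizesCharSeq (n p : ℕ) (x : A) : Prop :=
  x ∉ pmul A ⊤ ⊤ ∧ (LinearMap.mulLeft ℂ x) ^ (n - p - 1) ≠ 0 ∧
    Module.finrank ℂ (LinearMap.range (LinearMap.mulLeft ℂ x)) = n - p - 1

/-- `A` is `p`-filiform: `C(A) = (n-p, 1, …, 1)`, i.e. some `x ∈ A ∖ A²` realizes the
characteristic sequence, and for every `y ∈ A ∖ A²` one has `L_y^{n-p} = 0` and, if
`L_y^{n-p-1} ≠ 0`, then `rank L_y = n-p-1`. -/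
def IsPFiliform (n p : ℕ) : Prop :=
  (∃ x : A, RealizesCharSeq A n p x) ∧
    ∀ y : A, y ∉ pmul A ⊤ ⊤ →
      (LinearMap.mulLeft ℂ y) ^ (n - p) = 0 ∧
        ((LinearMap.mulLeft ℂ y) ^ (n - p - 1) ≠ 0 →
          Module.finrank ℂ (LinearMap.range (LinearMap.mulLeft ℂ y)) = n - p - 1)

/-- An adapted basis `{e_1,…,e_{n-p}, f_1,…,f_p}` of a `p`-filiform algebra:
a basis with `e_1` realizing the characteristic sequence, `e_1 e_i = e_{i+1}` for
`1 ≤ i ≤ n-p-1`, `e_1 e_{n-p} = 0`, and `e_1 f_j = 0` for `1 ≤ j ≤ p`. -/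
structure IsAdaptedBasis (n p : ℕ) (e f : ℕ → A) : Prop where
  indep : LinearIndependent ℂ
    (Sum.elim (fun i : Fin (n - p) => e (i.1 + 1)) (fun j : Fin p => f (j.1 + 1)))
  span : Submodule.span ℂ (Set.range
    (Sum.elim (fun i : Fin (n - p) => e (i.1 + 1)) (fun j : Fin p => f (j.1 + 1)))) = ⊤
  char : RealizesCharSeq A n p (e 1)
  mul_e : ∀ i, 1 ≤ i → i ≤ n - p - 1 → e 1 * e i = e (i + 1)
  mul_last : e 1 * e (n - p) = 0
  mul_f : ∀ j, 1 ≤ j → j ≤ p → e 1 * f j = 0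

/-- `s_i = dim 𝒜_i − 1` (truncated subtraction). -/
noncomputable def sdim (𝒜 : ℕ → Submodule ℂ A) (i : ℕ) : ℕ :=
  Module.finrank ℂ (𝒜 i) - 1

/-- `S k = s_1 + ⋯ + s_k` (with `S 0 = 0`). -/
noncomputable def sSum (𝒜 : ℕ → Submodule ℂ A) (k : ℕ) : ℕ :=
  ∑ j ∈ Finset.Icc 1 k, sdim A 𝒜 j

/-- A homogeneous adapted basis: an adapted basis with `e_i ∈ 𝒜_i` for
`1 ≤ i ≤ n-p` and `f_{s_1+⋯+s_{i-1}+1}, …, f_{s_1+⋯+s_i} ∈ 𝒜_i` for `1 ≤ i ≤ n-p`. -/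
structure IsHomogAdaptedBasis (n p : ℕ) (𝒜 : ℕ → Submodule ℂ A) (e f : ℕ → A) : Prop where
  adapted : IsAdaptedBasis A n p e f
  e_mem : ∀ i, 1 ≤ i → i ≤ n - p → e i ∈ 𝒜 i
  f_mem : ∀ i, 1 ≤ i → i ≤ n - p →
    ∀ t, sSum A 𝒜 (i - 1) < t → t ≤ sSum A 𝒜 i → f t ∈ 𝒜 i

/-!
Put `m = n - p` and `z = e₁ + t x`. Since `e₁ x = 0`, `L_z^{m-1} e₁ = Σₐ tᵃ L_xᵃ e_{m-a}` is a
polynomial in `t` with constant term `e_m ≠ 0`, so for generic `t ≠ 0` we get `L_z^{m-1} ≠ 0`;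
as `z ∈ 𝒜₁ ∖ {0}` lies outside `A²`, `p`-filiformity forces `rank L_z = m - 1`. But the range of
`L_z` contains `L_z^k e₁` for `1 ≤ k ≤ m - 2`, which `L_{e₁}` sends to the independent vectors
`e₃, …, e_m`, together with `L_z^{m-1} e₁ ∈ 𝒜_m` and `t⁻¹ z y = x y ∈ 𝒜₂`, both killed by `L_{e₁}`.
If `x y ≠ 0` these are `m` independent vectors.
-/

open LinearMap (mulLeft)
open Finset

theorem LinearIndependent.sumElim_of_comp_of_map_eq_zero {R M N ι ι' : Type*} [Ring R]
    [AddCommGroup M] [AddCommGroup N] [Module R M] [Module R N] {f : M →ₗ[R] N}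
    {v : ι → M} {w : ι' → M} (hv : LinearIndependent R (f ∘ v)) (hw : LinearIndependent R w)
    (hfw : ∀ i, f (w i) = 0) : LinearIndependent R (Sum.elim v w) :=
  linearIndependent_sum.2 ⟨hv.of_comp, hw, (Submodule.range_ker_disjoint hv).mono_right <|
    Submodule.span_le.2 <| Set.range_subset_iff.2 hfw⟩

theorem LinearIndependent.card_le_finrank_of_range_subset {K V ι : Type*} [DivisionRing K]
    [AddCommGroup V] [Module K V] [Fintype ι] {v : ι → V} (hv : LinearIndependent K v)
    {W : Submodule K V} [Module.Finite K W] (h : Set.range v ⊆ W) :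
    Fintype.card ι ≤ Module.finrank K W :=
  finrank_span_eq_card hv ▸ Submodule.finrank_mono (Submodule.span_le.2 h)

theorem finite_setOf_sum_pow_smul_eq_zero {K V : Type*} [Field K] [AddCommGroup V] [Module K V]
    {c : ℕ → V} (hc : c 0 ≠ 0) (N : ℕ) :
    {t : K | ∑ a ∈ range (N + 1), t ^ a • c a = 0}.Finite := by
  obtain ⟨φ, hφ⟩ := Module.Projective.exists_dual_ne_zero K hc
  obtain ⟨Q, hQ⟩ : ∃ Q : Polynomial K, ∀ t, Q.eval t = φ (∑ a ∈ range (N + 1), t ^ a • c a) :=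
    ⟨∑ a ∈ range (N + 1), Polynomial.C (φ (c a)) * Polynomial.X ^ a, fun t => by
      rw [Polynomial.eval_finsetSum, map_sum]
      refine sum_congr rfl fun a _ => ?_
      rw [Polynomial.eval_mul, Polynomial.eval_C, Polynomial.eval_pow, Polynomial.eval_X, map_smul,
        smul_eq_mul, mul_comm]⟩
  have hQ0 : Q ≠ 0 := fun h => hφ <| by simpa [h, sum_range_succ'] using (hQ 0).symm
  refine (Polynomial.finite_setOfPred_isRoot hQ0).subset fun t ht => ?_
  rw [Set.mem_ofPred_eq, Polynomial.IsRoot.def, hQ, ht, map_zero]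

section LeftMultiplication

variable {R B : Type*} [CommSemiring R] [NonUnitalSemiring B] [Module R B]
  [SMulCommClass R B B]

theorem mul_sum_pow_smul_mulLeft_pow_apply {y x : B} (h : y * x = 0) (t : R) (c : ℕ → B)
    (k : ℕ) : y * ∑ a ∈ range (k + 1), t ^ a • (mulLeft R x ^ a) (c a) = y * c 0 := by
  rw [sum_range_succ', mul_add, mul_sum]
  simp [pow_succ', ← mul_assoc, h, mul_smul_comm]

variable [IsScalarTower R B B] {e : ℕ → B} {x : B}

theorem mulLeft_add_smul_pow_apply (hx : e 1 * x = 0) {k : ℕ}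
    (he : ∀ i, 1 ≤ i → i ≤ k → e 1 * e i = e (i + 1)) (t : R) :
    (mulLeft R (e 1 + t • x) ^ k) (e 1) =
      ∑ a ∈ range (k + 1), t ^ a • (mulLeft R x ^ a) (e (k + 1 - a)) := by
  induction k with
  | zero => simp
  | succ k ih =>
    have hsplit : ∀ a, (mulLeft R (e 1 + t • x)) (t ^ a • (mulLeft R x ^ a) (e (k + 1 - a))) =
        t ^ a • (e 1 * (mulLeft R x ^ a) (e (k + 1 - a))) +
          t ^ (a + 1) • (mulLeft R x ^ (a + 1)) (e (k + 1 + 1 - (a + 1))) := fun a => by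
      simp [add_mul, smul_mul_assoc, smul_smul, pow_succ', mul_comm]
    rw [pow_succ', Module.End.mul_apply, ih fun i h1 h2 => he i h1 (by omega), map_sum,
      sum_congr rfl fun a _ => hsplit a, sum_add_distrib]
    simp_rw [← mul_smul_comm]
    rw [← mul_sum, mul_sum_pow_smul_mulLeft_pow_apply hx, sum_range_succ' _ (k + 1)]
    simp [he (k + 1) le_add_self le_rfl, add_comm]

theorem mul_mulLeft_add_smul_pow_apply (hx : e 1 * x = 0) {k : ℕ}
    (he : ∀ i, 1 ≤ i → i ≤ k → e 1 * e i = e (i + 1)) (t : R) :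
    e 1 * (mulLeft R (e 1 + t • x) ^ k) (e 1) = e 1 * e (k + 1) := by
  rw [mulLeft_add_smul_pow_apply hx he, mul_sum_pow_smul_mulLeft_pow_apply hx]
  simp

end LeftMultiplication

namespace IsNaturalGrading

variable {A : Type*} [NonUnitalRing A] [Module ℂ A] {𝒜 : ℕ → Submodule ℂ A}

theorem eq_zero_of_mem_zero (hgr : IsNaturalGrading A 𝒜) {a : A} (ha : a ∈ 𝒜 0) : a = 0 :=
  (Submodule.mem_bot ℂ).1 (hgr.zero ▸ ha)

theorem mul_mem (hgr : IsNaturalGrading A 𝒜) {i j : ℕ} {a b : A} (ha : a ∈ 𝒜 i)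
    (hb : b ∈ 𝒜 j) : a * b ∈ 𝒜 (i + j) := by
  rcases Nat.eq_zero_or_pos i with rfl | hi
  · simp [hgr.eq_zero_of_mem_zero ha]
  rcases Nat.eq_zero_or_pos j with rfl | hj
  · simp [hgr.eq_zero_of_mem_zero hb]
  exact hgr.mul_le i j hi hj (Submodule.subset_span (Set.mem_image2_of_mem ha hb))

theorem linearIndependent_pair (hgr : IsNaturalGrading A 𝒜) {i j : ℕ} (hij : i ≠ j) {a b : A}
    (ha : a ∈ 𝒜 i) (hb : b ∈ 𝒜 j) (ha0 : a ≠ 0) (hb0 : b ≠ 0) :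
    LinearIndependent ℂ ![a, b] := by
  refine iSupIndep.linearIndependent _ (hgr.internal.submodule_iSupIndep.comp
    (f := ![i, j]) ?_) (Fin.forall_fin_two.2 ⟨ha, hb⟩) (Fin.forall_fin_two.2 ⟨ha0, hb0⟩)
  intro k l hkl
  fin_cases k <;> fin_cases l <;> simp_all [eq_comm]

variable [SMulCommClass ℂ A A]

theorem mulLeft_pow_apply_mem (hgr : IsNaturalGrading A 𝒜) {z w : A} (hz : z ∈ 𝒜 1) {i : ℕ}
    (hw : w ∈ 𝒜 i) (k : ℕ) : (mulLeft ℂ z ^ k) w ∈ 𝒜 (i + k) := by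
  induction k with
  | zero => simpa using hw
  | succ k ih =>
    rw [pow_succ', Module.End.mul_apply, LinearMap.mulLeft_apply, ← add_assoc, add_comm _ 1]
    exact hgr.mul_mem hz ih

variable [IsScalarTower ℂ A A]

theorem disjoint_one_sq (hgr : IsNaturalGrading A 𝒜) : Disjoint (𝒜 1) (pmul A ⊤ ⊤) := by
  refine (hgr.internal.submodule_iSupIndep 1).mono_right ?_
  have hsq : pmul A ⊤ ⊤ = Submodule.map₂ (LinearMap.mul ℂ A) ⊤ ⊤ := by
    rw [Submodule.map₂_eq_span_image2]; rfl
  rw [hsq, ← hgr.internal.submodule_iSup_eq_top, Submodule.map₂_iSup_left]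
  refine iSup_le fun i => ?_
  rw [Submodule.map₂_iSup_right]
  refine iSup_le fun j => Submodule.map₂_le.2 fun a ha b hb => ?_
  rw [LinearMap.mul_apply']
  by_cases hij : i = 0 ∨ j = 0
  · rcases hij with rfl | rfl
    · simp [hgr.eq_zero_of_mem_zero ha]
    · simp [hgr.eq_zero_of_mem_zero hb]
  · exact Submodule.mem_iSup_of_mem (i + j)
      (Submodule.mem_iSup_of_mem (by omega) (hgr.mul_mem ha hb))

end IsNaturalGrading

namespace IsAdaptedBasis

variable {A : Type*} [NonUnitalRing A] [Module ℂ A] [SMulCommClass ℂ A A] {n p : ℕ}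
  {e f : ℕ → A}

theorem e_ne_zero (hb : IsAdaptedBasis A n p e f) {i : ℕ} (h1 : 1 ≤ i) (h2 : i ≤ n - p) :
    e i ≠ 0 := by
  simpa [show i - 1 + 1 = i by omega] using hb.indep.ne_zero (Sum.inl ⟨i - 1, by omega⟩)

theorem linearIndependent_e_add (hb : IsAdaptedBasis A n p e f) (j : ℕ) :
    LinearIndependent ℂ (fun k : Fin (n - p - j) => e (k + j + 1)) :=
  hb.indep.comp (fun k : Fin (n - p - j) => Sum.inl ⟨k + j, by have := k.2; omega⟩)
    fun k l hkl => by simpa [Fin.ext_iff] using hkl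

variable [IsScalarTower ℂ A A] {x : A}

theorem exists_ne_zero_mulLeft_add_smul_pow_apply_ne_zero (hb : IsAdaptedBasis A n p e f)
    (hnp : 1 ≤ n - p) (hex : e 1 * x = 0) :
    ∃ t : ℂ, t ≠ 0 ∧ (mulLeft ℂ (e 1 + t • x) ^ (n - p - 1)) (e 1) ≠ 0 := by
  set c : ℕ → A := fun a => (mulLeft ℂ x ^ a) (e (n - p - 1 + 1 - a))
  have hc : c 0 ≠ 0 := by simpa [c, Nat.sub_add_cancel hnp] using hb.e_ne_zero hnp le_rfl
  obtain ⟨t, ht⟩ :=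
    ((finite_setOf_sum_pow_smul_eq_zero (K := ℂ) hc (n - p - 1)).insert 0).infinite_compl.nonempty
  refine ⟨t, fun h => ht (Or.inl h), fun h => ht (Or.inr ?_)⟩
  rwa [mulLeft_add_smul_pow_apply hex fun i h1 h2 => hb.mul_e i h1 h2] at h

theorem linearIndependent_mulLeft_add_smul_pow_apply (hb : IsAdaptedBasis A n p e f)
    {𝒜 : ℕ → Submodule ℂ A} (hgr : IsNaturalGrading A 𝒜) (hnp : 3 ≤ n - p) (he1 : e 1 ∈ 𝒜 1)
    (hx : x ∈ 𝒜 1) (hex : e 1 * x = 0) {t : ℂ}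
    (hlast : (mulLeft ℂ (e 1 + t • x) ^ (n - p - 1)) (e 1) ≠ 0)
    {w : A} (hw : w ∈ 𝒜 2) (hw0 : w ≠ 0) (hew : e 1 * w = 0) :
    LinearIndependent ℂ (Sum.elim (fun k : Fin (n - p - 2) =>
      (mulLeft ℂ (e 1 + t • x) ^ (k + 1 : ℕ)) (e 1))
        ![w, (mulLeft ℂ (e 1 + t • x) ^ (n - p - 1)) (e 1)]) := by
  have hmul : ∀ k, k ≤ n - p - 1 →
      e 1 * (mulLeft ℂ (e 1 + t • x) ^ k) (e 1) = e 1 * e (k + 1) := fun k hk =>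
    mul_mulLeft_add_smul_pow_apply hex (fun i h1 h2 => hb.mul_e i h1 (by omega)) t
  have hlast_mem : (mulLeft ℂ (e 1 + t • x) ^ (n - p - 1)) (e 1) ∈ 𝒜 (n - p) := by
    simpa [show 1 + (n - p - 1) = n - p by omega] using
      hgr.mulLeft_pow_apply_mem (add_mem he1 (Submodule.smul_mem _ t hx)) he1 (n - p - 1)
  refine LinearIndependent.sumElim_of_comp_of_map_eq_zero (f := mulLeft ℂ (e 1)) ?_
    (hgr.linearIndependent_pair (by omega) hw hlast_mem hw0 hlast) ?_
  · have himage : mulLeft ℂ (e 1) ∘ (fun k : Fin (n - p - 2) =>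
        (mulLeft ℂ (e 1 + t • x) ^ (k + 1 : ℕ)) (e 1)) =
          fun k : Fin (n - p - 2) => e (k + 2 + 1) := by
      ext k
      simp [hmul (k + 1) (by omega), hb.mul_e (k + 2) (by omega) (by omega), add_assoc]
    exact himage ▸ hb.linearIndependent_e_add 2
  · simp [Fin.forall_fin_two, hew, hmul (n - p - 1) le_rfl,
      Nat.sub_add_cancel (by omega : 1 ≤ n - p), hb.mul_last]

theorem sub_le_finrank_range_mulLeft_add_smul (hb : IsAdaptedBasis A n p e f)
    {𝒜 : ℕ → Submodule ℂ A} (hgr : IsNaturalGrading A 𝒜) (hnp : 3 ≤ n - p) (he1 : e 1 ∈ 𝒜 1)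
    (hx : x ∈ 𝒜 1) (hex : e 1 * x = 0) {t : ℂ} (ht0 : t ≠ 0)
    (hlast : (mulLeft ℂ (e 1 + t • x) ^ (n - p - 1)) (e 1) ≠ 0)
    {y : A} (hy : y ∈ 𝒜 1) (hey : e 1 * y = 0) (hxy : x * y ≠ 0)
    [Module.Finite ℂ (LinearMap.range (mulLeft ℂ (e 1 + t • x)))] :
    n - p ≤ Module.finrank ℂ (LinearMap.range (mulLeft ℂ (e 1 + t • x))) := by
  have hpow : ∀ k, (mulLeft ℂ (e 1 + t • x) ^ (k + 1)) (e 1) ∈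
      LinearMap.range (mulLeft ℂ (e 1 + t • x)) := fun k => by
    rw [pow_succ', Module.End.mul_apply]; exact LinearMap.mem_range_self _ _
  have hcard := (hb.linearIndependent_mulLeft_add_smul_pow_apply hgr hnp he1 hx hex hlast
    (hgr.mul_mem hx hy) hxy (by rw [← mul_assoc, hex, zero_mul])).card_le_finrank_of_range_subset
    (W := LinearMap.range (mulLeft ℂ (e 1 + t • x))) (Set.range_subset_iff.2 ?_)
  · simp only [Fintype.card_sum, Fintype.card_fin] at hcard
    omega
  rintro (k | k)
  · exact hpow k
  · fin_cases k
    · refine ⟨t⁻¹ • y, ?_⟩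
      simp [add_mul, smul_mul_assoc, hey, smul_smul, ht0]
    · simpa [show n - p - 2 + 1 = n - p - 1 by omega] using hpow (n - p - 2)

end IsAdaptedBasis

theorem deg_one_kernel_mul_zero (n p : ℕ) (hnp : 3 ≤ n - p)
    (𝒜 : ℕ → Submodule ℂ A) (hgr : IsNaturalGrading A 𝒜)
    (hpf : IsPFiliform A n p)
    (e f : ℕ → A) (hbasis : IsAdaptedBasis A n p e f)
    (he : ∀ i, 1 ≤ i → i ≤ n - p → e i ∈ 𝒜 i)
    (x y : A) (hx : x ∈ 𝒜 1) (hy : y ∈ 𝒜 1)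
    (hx0 : e 1 * x = 0) (hy0 : e 1 * y = 0) :
    x * y = 0 := by
  by_contra hxy
  obtain ⟨t, ht0, hlast⟩ :=
    hbasis.exists_ne_zero_mulLeft_add_smul_pow_apply_ne_zero (by omega) hx0
  set z := e 1 + t • x
  have he1 := he 1 le_rfl (by omega)
  have hz : z ∈ 𝒜 1 := add_mem he1 (Submodule.smul_mem _ t hx)
  have hz_sq : z ∉ pmul A ⊤ ⊤ := fun h => hlast <| by
    simp [Submodule.disjoint_def.1 hgr.disjoint_one_sq z hz h, zero_pow (by omega : n - p - 1 ≠ 0)]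
  have hrank := (hpf.2 z hz_sq).2 fun h => hlast (by rw [h]; rfl)
  have : Module.Finite ℂ (LinearMap.range (mulLeft ℂ z)) := Module.finite_of_finrank_pos (by omega)
  have hle : n - p ≤ Module.finrank ℂ (LinearMap.range (mulLeft ℂ z)) :=
    hbasis.sub_le_finrank_range_mulLeft_add_smul hgr hnp he1 hx hx0 ht0 hlast hy hy0 hxy
  omega
end

section
/- Let A be an n-dimensional naturally graded p-filiform non-unital associative algebra over ℂ (p ≥ 1, n − p ≥ 3) with natural grading (𝒜_i), and write s_i = dim 𝒜_i − 1 for 1 ≤ i ≤ n − p. If for some k with 1 ≤ k ≤ n − p − 1 one has s_1 + s_2 + ⋯ + s_k < p (equivalently, dim(𝒜_1 + 𝒜_2 + ⋯ + 𝒜_k) < k + p), then s_{k+1} ≠ 0, i.e. dim 𝒜_{k+1} ≥ 2. -/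
/-!
Two facts about the natural grading combine. First, a one-dimensional component `𝒜_i`
(`i ≥ 2`) is spanned by a product `w z` with `z ∈ 𝒜_1`, and then `x (w z) = (x w) z ∈ ℂ (w z) z`
for `x ∈ 𝒜_1`; so once `dim 𝒜_{k+1} = 1`, all later components have dimension at most one.
Second, `𝒜_{n-p+1} = 0`: otherwise pick `b_t ∈ 𝒜_t` with `𝒜_1 b_t ≠ 0` for `t ≤ n - p`, write
`e_1 = x_1 + x'` with `x_1 ∈ 𝒜_1` and `x'` of degree `≥ 2`, and replace `x_1` by a generic
`v ∈ 𝒜_1`. Then `y = v + x'` lies outside `A²`, `L_y^{n-p-1} ≠ 0`, and the products `y b_t` have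
nonzero leading terms `v b_t` in distinct degrees, so `rank L_y ≥ n - p`, contradicting
`p`-filiformity. Counting dimensions, `n ≤ Σ_{i ≤ n-p} dim 𝒜_i < (k + p) + (n - p - k)`.
-/

variable (A : Type*) [NonUnitalRing A] [Module ℂ A] [SMulCommClass ℂ A A] [IsScalarTower ℂ A A]

open Polynomial Finset

section GenericLine

variable {K V : Type*} [Field K] [AddCommGroup V] [Module K V]

theorem finite_setOf_sum_pow_smul_eq_zero_s10 {N j : ℕ} {w : ℕ → V} (hj : j < N) (hw : w j ≠ 0) :
    {c : K | ∑ i ∈ range N, c ^ i • w i = 0}.Finite := by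
  obtain ⟨φ, hφ⟩ := Module.Projective.exists_dual_ne_zero K hw
  set P : K[X] := ∑ i ∈ range N, C (φ (w i)) * X ^ i
  have hP : P ≠ 0 := fun h ↦ hφ <| by
    simpa [P, finsetSum_coeff, coeff_C_mul_X_pow, hj] using congrArg (coeff · j) h
  refine (P.finite_setOfPred_isRoot hP).subset fun c (hc : _ = _) ↦ ?_
  have : P.eval c = φ (∑ i ∈ range N, c ^ i • w i) := by
    simp only [P, eval_finsetSum, eval_mul, eval_C, eval_pow, eval_X, map_sum, map_smul,
      smul_eq_mul, mul_comm]
  show P.IsRoot c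
  rw [IsRoot.def, this, hc, map_zero]

theorem finite_setOf_add_smul_eq_zero {u₀ u₁ : V} (h : u₀ ≠ 0 ∨ u₁ ≠ 0) :
    {c : K | u₀ + c • u₁ = 0}.Finite := by
  let w : ℕ → V := fun i ↦ if i = 0 then u₀ else u₁
  have hsum : ∀ c : K, ∑ i ∈ range 2, c ^ i • w i = u₀ + c • u₁ := fun c ↦ by
    simp [w, sum_range_succ]
  simp_rw [← hsum]
  rcases h with h | h
  exacts [finite_setOf_sum_pow_smul_eq_zero_s10 (j := 0) (by norm_num) h,
    finite_setOf_sum_pow_smul_eq_zero_s10 (j := 1) (by norm_num) h]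

/-- `c ↦ (F + c • G) ^ m` is the evaluation at the central element `c` of the polynomial
`(C G * X + C F) ^ m` with coefficients in `Module.End K V`. -/
theorem exists_pow_add_smul_apply_eq_sum (F G : Module.End K V) (m : ℕ) (z : V) :
    ∃ w : ℕ → V, w 0 = (F ^ m) z ∧
      ∀ c : K, ((F + c • G) ^ m) z = ∑ i ∈ range (m + 1), c ^ i • w i := by
  set P : (Module.End K V)[X] := (C G * X + C F) ^ m
  have hP0 : P.coeff 0 = F ^ m := by
    rw [← constantCoeff_apply, map_pow]
    simp [constantCoeff_apply]
  refine ⟨fun i ↦ P.coeff i z, by simp only [hP0], fun c ↦ ?_⟩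
  have hdeg : P.natDegree < m + 1 :=
    Nat.lt_succ_of_le <| (natDegree_pow_le_of_le m natDegree_linear_le).trans_eq (mul_one m)
  have hev : P.eval₂ (RingHom.id _) (algebraMap K _ c) = (F + c • G) ^ m := by
    have : P.eval₂ (RingHom.id _) (algebraMap K _ c)
        = (eval₂ (RingHom.id _) (algebraMap K _ c) (C G * X + C F)) ^ m :=
      map_pow (eval₂RingHom' (RingHom.id _) (algebraMap K (Module.End K V) c)
        fun a ↦ (Algebra.commutes c a).symm) (C G * X + C F) m
    rw [this, eval₂_add, eval₂_mul_X, eval₂_C, eval₂_C, RingHom.id_apply, RingHom.id_apply,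
      add_comm, Algebra.smul_def, Algebra.commutes]
  rw [← hev, eval₂_eq_sum_range' _ hdeg, LinearMap.sum_apply]
  refine sum_congr rfl fun i _ ↦ ?_
  rw [RingHom.id_apply, ← map_pow, ← Algebra.commutes, ← Algebra.smul_def, LinearMap.smul_apply]

end GenericLine

/-- Moving `v` along lines `v + c • a t` and avoiding finitely many bad `c` each time keeps
the nonvanishing conditions already achieved while adding the new one. -/
theorem exists_mem_mulLeft_pow_apply_ne_zero_and_mul_ne_zero {K B ι : Type*} [Field K]
    [Infinite K] [NonUnitalRing B] [Module K B] [SMulCommClass K B B] [IsScalarTower K B B]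
    {S : Submodule K B} {x₁ x' z : B} {m : ℕ} (hx₁ : x₁ ∈ S)
    (hz : (LinearMap.mulLeft K (x₁ + x') ^ m) z ≠ 0) {a b : ι → B} {s : Finset ι}
    (ha : ∀ t ∈ s, a t ∈ S) (hab : ∀ t ∈ s, a t * b t ≠ 0) :
    ∃ v ∈ S, (LinearMap.mulLeft K (v + x') ^ m) z ≠ 0 ∧ ∀ t ∈ s, v * b t ≠ 0 := by
  classical
  induction s using Finset.induction_on with
  | empty => exact ⟨x₁, hx₁, hz, by simp⟩
  | insert t s _ ih =>
    obtain ⟨v, hv, hvz, hvb⟩ := ih (fun r hr ↦ ha r (mem_insert_of_mem hr))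
      (fun r hr ↦ hab r (mem_insert_of_mem hr))
    obtain ⟨w, hw0, hw⟩ := exists_pow_add_smul_apply_eq_sum
      (LinearMap.mulLeft K (v + x')) (LinearMap.mulLeft K (a t)) m z
    have hmulLeft : ∀ c : K, LinearMap.mulLeft K (v + c • a t + x')
        = LinearMap.mulLeft K (v + x') + c • LinearMap.mulLeft K (a t) := fun c ↦ by
      ext y; simp [add_mul, smul_mul_assoc, add_right_comm]
    have hpow : {c : K | (LinearMap.mulLeft K (v + c • a t + x') ^ m) z = 0}.Finite := by
      simp_rw [hmulLeft, hw]
      exact finite_setOf_sum_pow_smul_eq_zero_s10 (Nat.succ_pos m) (hw0 ▸ hvz)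
    have hmul : ∀ r ∈ insert t s, {c : K | (v + c • a t) * b r = 0}.Finite := by
      intro r hr
      simp_rw [add_mul, smul_mul_assoc]
      refine finite_setOf_add_smul_eq_zero ?_
      rcases mem_insert.mp hr with rfl | hr
      exacts [Or.inr (hab r (mem_insert_self r s)), Or.inl (hvb r hr)]
    obtain ⟨c, hc⟩ := (hpow.union ((insert t s).finite_toSet.biUnion hmul)).exists_notMem
    simp only [Set.mem_union, Set.mem_ofPred_eq, Set.mem_iUnion, not_or, not_exists] at hc
    exact ⟨v + c • a t, add_mem hv (S.smul_mem c (ha t (mem_insert_self t s))), hc.1, hc.2⟩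

theorem linearIndependent_of_mem_of_notMem_succ {K V : Type*} [DivisionRing K] [AddCommGroup V]
    [Module K V] {d : ℕ} {F : ℕ → Submodule K V} (hF : Antitone F) {u : Fin d → V}
    (hmem : ∀ i : Fin d, u i ∈ F i) (hnotMem : ∀ i : Fin d, u i ∉ F (i + 1)) :
    LinearIndependent K u := by
  induction d generalizing F with
  | zero => exact linearIndependent_empty_type
  | succ d ih =>
    refine linearIndependent_finSucc.mpr ⟨ih (fun i j h ↦ hF (by omega)) (fun i ↦ hmem i.succ)
      (fun i ↦ hnotMem i.succ), fun h ↦ hnotMem 0 ?_⟩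
    refine Submodule.span_le.mpr ?_ h
    rintro _ ⟨i, rfl⟩
    exact hF (by simp) (hmem i.succ)

theorem Submodule.finrank_biSup_le_sum {K V ι : Type*} [DivisionRing K] [AddCommGroup V]
    [Module K V] [FiniteDimensional K V] (p : ι → Submodule K V) (s : Finset ι) :
    Module.finrank K ↥(⨆ i ∈ s, p i) ≤ ∑ i ∈ s, Module.finrank K (p i) := by
  classical
  induction s using Finset.induction_on with
  | empty => simp
  | insert a s ha ih =>
    rw [Finset.iSup_insert, sum_insert ha]
    exact (Submodule.finrank_add_le_finrank_add_finrank _ _).trans (Nat.add_le_add_left ih _)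

section Graded

variable {A : Type*} [NonUnitalRing A] [Module ℂ A] {𝒜 : ℕ → Submodule ℂ A}

theorem mul_mem_pmul {I J : Submodule ℂ A} {x y : A} (hx : x ∈ I) (hy : y ∈ J) :
    x * y ∈ pmul A I J :=
  Submodule.subset_span (Set.mem_image2_of_mem hx hy)

theorem pmul_le {I J K : Submodule ℂ A} : pmul A I J ≤ K ↔ ∀ x ∈ I, ∀ y ∈ J, x * y ∈ K := by
  rw [pmul, Submodule.span_le, Set.image2_subset_iff]
  rfl

theorem pmul_bot_right (I : Submodule ℂ A) : pmul A I ⊥ = ⊥ :=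
  le_bot_iff.mp <| pmul_le.mpr fun x _ y hy ↦ by
    rw [(Submodule.mem_bot ℂ).mp hy, mul_zero]
    exact zero_mem _

theorem exists_mul_ne_zero_of_pmul_ne_bot {I J : Submodule ℂ A} (h : pmul A I J ≠ ⊥) :
    ∃ x ∈ I, ∃ y ∈ J, x * y ≠ 0 := by
  contrapose! h
  exact le_bot_iff.mp (pmul_le.mpr fun x hx y hy ↦ (Submodule.mem_bot ℂ).mpr (h x hx y hy))

theorem IsNaturalGrading.eq_bot_of_le (hgr : IsNaturalGrading A 𝒜) {i j : ℕ} (hi : 1 ≤ i)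
    (hbot : 𝒜 i = ⊥) (hij : i ≤ j) : 𝒜 j = ⊥ := by
  induction j, hij using Nat.le_induction with
  | base => exact hbot
  | succ j hij ih => rw [hgr.succ j (hi.trans hij), ih, pmul_bot_right]

/-- `A_{≥ i} = ⨁_{t ≥ i} 𝒜 t`. -/
def gradedFiltration (𝒜 : ℕ → Submodule ℂ A) (i : ℕ) : Submodule ℂ A :=
  ⨆ t, 𝒜 (i + t)

theorem le_gradedFiltration {i t : ℕ} (h : i ≤ t) : 𝒜 t ≤ gradedFiltration 𝒜 i := by
  obtain ⟨s, rfl⟩ := Nat.exists_eq_add_of_le h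
  exact le_iSup (fun s ↦ 𝒜 (i + s)) s

theorem gradedFiltration_antitone : Antitone (gradedFiltration 𝒜) :=
  fun i j h ↦ iSup_le fun t ↦ le_gradedFiltration (by omega)

theorem gradedFiltration_eq_sup (i : ℕ) :
    gradedFiltration 𝒜 i = 𝒜 i ⊔ gradedFiltration 𝒜 (i + 1) := by
  refine le_antisymm (iSup_le fun t ↦ ?_)
    (sup_le (le_gradedFiltration le_rfl) (gradedFiltration_antitone (by omega)))
  rcases t with _ | t
  exacts [le_sup_left, (le_gradedFiltration (by omega)).trans le_sup_right]

namespace IsNaturalGrading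

theorem gradedFiltration_one (hgr : IsNaturalGrading A 𝒜) : gradedFiltration 𝒜 1 = ⊤ :=
  calc gradedFiltration 𝒜 1 = 𝒜 0 ⊔ gradedFiltration 𝒜 (0 + 1) := by rw [hgr.zero, bot_sup_eq]
    _ = ⊤ := by
      rw [← gradedFiltration_eq_sup, gradedFiltration]
      simpa using hgr.internal.submodule_iSup_eq_top

theorem mul_mem_gradedFiltration (hgr : IsNaturalGrading A 𝒜) {i j : ℕ} {x y : A}
    (hx : x ∈ gradedFiltration 𝒜 i) (hy : y ∈ gradedFiltration 𝒜 j) :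
    x * y ∈ gradedFiltration 𝒜 (i + j) := by
  induction hx using Submodule.iSup_induction' with
  | zero => simp
  | add x₁ x₂ _ _ h₁ h₂ => rw [add_mul]; exact add_mem h₁ h₂
  | mem s x hx =>
    induction hy using Submodule.iSup_induction' with
    | zero => simp
    | add y₁ y₂ _ _ h₁ h₂ => rw [mul_add]; exact add_mem h₁ h₂
    | mem t y hy =>
      rcases Nat.eq_zero_or_pos (i + s) with h | h
      · rw [h, hgr.zero, Submodule.mem_bot] at hx
        simp [hx]
      rcases Nat.eq_zero_or_pos (j + t) with h' | h'
      · rw [h', hgr.zero, Submodule.mem_bot] at hy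
        simp [hy]
      exact le_gradedFiltration (by omega) (hgr.mul_le _ _ h h' (mul_mem_pmul hx hy))

theorem eq_zero_of_mem_gradedFiltration_succ (hgr : IsNaturalGrading A 𝒜) {s : ℕ} {z : A}
    (hz : z ∈ 𝒜 s) (hz' : z ∈ gradedFiltration 𝒜 (s + 1)) : z = 0 := by
  have hle : gradedFiltration 𝒜 (s + 1) ≤ ⨆ (j) (_ : j ≠ s), 𝒜 j :=
    iSup_le fun t ↦ le_iSup₂_of_le (f := fun j (_ : j ≠ s) ↦ 𝒜 j) (s + 1 + t) (by omega) le_rfl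
  exact Submodule.disjoint_def.mp (hgr.internal.submodule_iSupIndep s) z hz (hle hz')

theorem add_notMem_pmul_top (hgr : IsNaturalGrading A 𝒜) {v w : A} (hv : v ∈ 𝒜 1)
    (hv0 : v ≠ 0) (hw : w ∈ gradedFiltration 𝒜 2) : v + w ∉ pmul A ⊤ ⊤ := by
  have hsq : pmul A ⊤ ⊤ ≤ gradedFiltration 𝒜 (1 + 1) := pmul_le.mpr fun x _ y _ ↦
    hgr.mul_mem_gradedFiltration (by simp [hgr.gradedFiltration_one])
      (by simp [hgr.gradedFiltration_one])
  refine fun h ↦ hv0 (hgr.eq_zero_of_mem_gradedFiltration_succ hv ?_)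
  simpa using sub_mem (hsq h) hw

theorem finrank_le_sum_finrank [FiniteDimensional ℂ A] (hgr : IsNaturalGrading A 𝒜) {d : ℕ}
    (hd : 𝒜 (d + 1) = ⊥) : Module.finrank ℂ A ≤ ∑ i ∈ Icc 1 d, Module.finrank ℂ (𝒜 i) := by
  have htop : ⊤ ≤ ⨆ i ∈ Icc 1 d, 𝒜 i := by
    rw [← hgr.internal.submodule_iSup_eq_top]
    refine iSup_le fun t ↦ ?_
    rcases Nat.eq_zero_or_pos t with rfl | ht
    · simp [hgr.zero]
    rcases le_or_gt t d with htd | htd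
    · exact le_biSup 𝒜 (mem_Icc.mpr ⟨ht, htd⟩)
    · simp [hgr.eq_bot_of_le (by omega) hd htd]
  rw [← finrank_top ℂ A, ← top_le_iff.mp htop]
  exact Submodule.finrank_biSup_le_sum 𝒜 _

end IsNaturalGrading

variable [SMulCommClass ℂ A A]

theorem IsNaturalGrading.le_finrank_range_mulLeft [FiniteDimensional ℂ A]
    (hgr : IsNaturalGrading A 𝒜) {v x' : A} (hv : v ∈ 𝒜 1) (hx' : x' ∈ gradedFiltration 𝒜 2)
    {d : ℕ} {b : Fin d → A}
    (hb : ∀ i : Fin d, b i ∈ 𝒜 (i + 1)) (hvb : ∀ i, v * b i ≠ 0) :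
    d ≤ Module.finrank ℂ (LinearMap.range (LinearMap.mulLeft ℂ (v + x'))) := by
  have hb' : ∀ i : Fin d, b i ∈ gradedFiltration 𝒜 (i + 1) :=
    fun i ↦ le_gradedFiltration le_rfl (hb i)
  have hmem : ∀ i : Fin d, (v + x') * b i ∈ gradedFiltration 𝒜 (i + 2) := fun i ↦ by
    simpa [add_comm 1, add_assoc] using hgr.mul_mem_gradedFiltration (i := 1)
      (by simp [hgr.gradedFiltration_one]) (hb' i)
  have hnotMem : ∀ i : Fin d, (v + x') * b i ∉ gradedFiltration 𝒜 (i + 1 + 2) := by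
    intro i h
    have hx'b : x' * b i ∈ gradedFiltration 𝒜 (i + 1 + 2) := by
      simpa [add_comm] using hgr.mul_mem_gradedFiltration hx' (hb' i)
    refine hvb i (hgr.eq_zero_of_mem_gradedFiltration_succ (s := i + 2) ?_ ?_)
    · exact hgr.succ (i + 1) (by omega) ▸ mul_mem_pmul hv (hb i)
    · simpa [add_mul] using sub_mem h hx'b
  have hli := linearIndependent_of_mem_of_notMem_succ (F := fun j ↦ gradedFiltration 𝒜 (j + 2))
    (fun j k h ↦ gradedFiltration_antitone (by omega)) hmem hnotMem
  calc d = Module.finrank ℂ (Submodule.span ℂ (Set.range fun i ↦ (v + x') * b i)) := by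
        simp [finrank_span_eq_card hli]
    _ ≤ _ := Submodule.finrank_mono <| Submodule.span_le.mpr <| Set.range_subset_iff.mpr
        fun i ↦ LinearMap.mem_range.mpr ⟨b i, rfl⟩

variable [IsScalarTower ℂ A A]

theorem pmul_assoc (I J K : Submodule ℂ A) :
    pmul A (pmul A I J) K = pmul A I (pmul A J K) := by
  refine le_antisymm (pmul_le.mpr fun q hq z hz ↦ ?_) (pmul_le.mpr fun x hx q hq ↦ ?_)
  · refine (?_ : pmul A I J ≤ (pmul A I (pmul A J K)).comap (LinearMap.mulRight ℂ z)) hq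
    exact pmul_le.mpr fun x hx y hy ↦ by
      simpa [mul_assoc] using mul_mem_pmul hx (mul_mem_pmul hy hz)
  · refine (?_ : pmul A J K ≤ (pmul A (pmul A I J) K).comap (LinearMap.mulLeft ℂ x)) hq
    exact pmul_le.mpr fun y hy z hz ↦ by
      simpa [mul_assoc] using mul_mem_pmul (mul_mem_pmul hx hy) hz

namespace IsNaturalGrading

theorem succ_eq_pmul_right (hgr : IsNaturalGrading A 𝒜) {i : ℕ} (hi : 1 ≤ i) :
    𝒜 (i + 1) = pmul A (𝒜 i) (𝒜 1) := by
  induction i, hi using Nat.le_induction with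
  | base => exact hgr.succ 1 le_rfl
  | succ i hi ih =>
    calc 𝒜 (i + 1 + 1) = pmul A (𝒜 1) (𝒜 (i + 1)) := hgr.succ (i + 1) (by omega)
      _ = pmul A (pmul A (𝒜 1) (𝒜 i)) (𝒜 1) := by rw [ih, pmul_assoc]
      _ = pmul A (𝒜 (i + 1)) (𝒜 1) := by rw [hgr.succ i hi]

theorem finrank_succ_le_one [FiniteDimensional ℂ A] (hgr : IsNaturalGrading A 𝒜) {i : ℕ}
    (hi : 2 ≤ i) (h : Module.finrank ℂ (𝒜 i) ≤ 1) : Module.finrank ℂ (𝒜 (i + 1)) ≤ 1 := by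
  obtain ⟨M, rfl⟩ : ∃ M, i = M + 1 := ⟨i - 1, by omega⟩
  rw [hgr.succ (M + 1) (by omega)]
  by_cases hbot : 𝒜 (M + 1) = ⊥
  · rw [hbot, pmul_bot_right, finrank_bot]
    exact zero_le_one
  obtain ⟨w, hw, z, hz, hwz⟩ :=
    exists_mul_ne_zero_of_pmul_ne_bot (hgr.succ_eq_pmul_right (i := M) (by omega) ▸ hbot)
  have hwz_mem : w * z ∈ 𝒜 (M + 1) :=
    hgr.succ_eq_pmul_right (i := M) (by omega) ▸ mul_mem_pmul hw hz
  have hspan : 𝒜 (M + 1) = ℂ ∙ (w * z) :=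
    (Submodule.eq_of_le_of_finrank_le ((Submodule.span_singleton_le_iff_mem _ _).mpr hwz_mem)
      (h.trans (finrank_span_singleton hwz).ge)).symm
  have hline : Module.finrank ℂ (ℂ ∙ (w * z * z)) ≤ 1 := (finrank_span_le_card _).trans (by simp)
  refine (Submodule.finrank_mono ?_).trans hline
  refine pmul_le.mpr fun x hx q hq ↦ ?_
  obtain ⟨c, rfl⟩ := Submodule.mem_span_singleton.mp (hspan ▸ hq)
  have hxw : x * w ∈ ℂ ∙ (w * z) := hspan ▸ hgr.succ M (by omega) ▸ mul_mem_pmul hx hw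
  obtain ⟨β, hβ⟩ := Submodule.mem_span_singleton.mp hxw
  refine Submodule.mem_span_singleton.mpr ⟨c * β, ?_⟩
  rw [mul_smul_comm, ← mul_assoc, ← hβ, smul_mul_assoc, mul_smul]

theorem finrank_le_one_of_le [FiniteDimensional ℂ A] (hgr : IsNaturalGrading A 𝒜) {i j : ℕ}
    (hi : 2 ≤ i) (h : Module.finrank ℂ (𝒜 i) ≤ 1) (hij : i ≤ j) :
    Module.finrank ℂ (𝒜 j) ≤ 1 := by
  induction j, hij using Nat.le_induction with
  | base => exact h
  | succ j hij ih => exact hgr.finrank_succ_le_one (hi.trans hij) ih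

theorem eq_bot_of_isPFiliform [FiniteDimensional ℂ A] (hgr : IsNaturalGrading A 𝒜) {n p : ℕ}
    (hpf : IsPFiliform A n p) (hnp : 1 ≤ n - p) : 𝒜 (n - p + 1) = ⊥ := by
  by_contra htop
  obtain ⟨⟨x, -, hxL, -⟩, hpf⟩ := hpf
  obtain ⟨z, hz⟩ : ∃ z, (LinearMap.mulLeft ℂ x ^ (n - p - 1)) z ≠ 0 := by
    by_contra! h
    exact hxL (LinearMap.ext h)
  obtain ⟨x₁, hx₁, x', hx', rfl⟩ : ∃ x₁ ∈ 𝒜 1, ∃ x' ∈ gradedFiltration 𝒜 2, x₁ + x' = x :=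
    Submodule.mem_sup.mp <|
      gradedFiltration_eq_sup (𝒜 := 𝒜) 1 ▸ hgr.gradedFiltration_one ▸ Submodule.mem_top
  have hprod : ∀ i : Fin (n - p), pmul A (𝒜 1) (𝒜 (i + 1)) ≠ ⊥ := fun i h ↦
    htop (hgr.eq_bot_of_le (by omega) (hgr.succ (i + 1) (by omega) ▸ h) (by omega))
  choose a ha b hb hab using fun i ↦ exists_mul_ne_zero_of_pmul_ne_bot (hprod i)
  obtain ⟨v, hv, hvz, hvb⟩ := exists_mem_mulLeft_pow_apply_ne_zero_and_mul_ne_zero hx₁ hz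
    (s := univ) (fun i _ ↦ ha i) (fun i _ ↦ hab i)
  have hv0 : v ≠ 0 := by
    rintro rfl
    exact hvb ⟨0, hnp⟩ (mem_univ _) (zero_mul _)
  have hrank := (hpf (v + x') (hgr.add_notMem_pmul_top hv hv0 hx')).2
    fun h ↦ hvz (by rw [h]; rfl)
  have := hgr.le_finrank_range_mulLeft hv hx' hb fun i ↦ hvb i (mem_univ i)
  omega

end IsNaturalGrading

end Graded

theorem next_component_nontrivial (n p : ℕ)
    [FiniteDimensional ℂ A] (hdim : Module.finrank ℂ A = n)
    (𝒜 : ℕ → Submodule ℂ A) (hgr : IsNaturalGrading A 𝒜)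
    (hpf : IsPFiliform A n p)
    (k : ℕ) (hk1 : 1 ≤ k) (hk2 : k ≤ n - p - 1)
    (hsum : (∑ i ∈ Finset.Icc 1 k, Module.finrank ℂ (𝒜 i)) < k + p) :
    2 ≤ Module.finrank ℂ (𝒜 (k + 1)) := by
  by_contra! hk
  have hsmall : ∑ i ∈ Icc (k + 1) (n - p), Module.finrank ℂ (𝒜 i) ≤ n - p - k := by
    simpa using sum_le_card_nsmul _ _ 1 fun i hi ↦
      hgr.finrank_le_one_of_le (i := k + 1) (by omega) (by omega) (mem_Icc.mp hi).1
  have hsplit :=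
    sum_Ioc_consecutive (fun i ↦ Module.finrank ℂ (𝒜 i)) k.zero_le (by omega : k ≤ n - p)
  simp only [← Icc_add_one_left_eq_Ioc, zero_add] at hsplit
  have := hgr.finrank_le_sum_finrank (hgr.eq_bot_of_isPFiliform hpf (by omega))
  omega
end
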